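/- Let H ≤ S_d act transitively on {1,…,d}, n ≥ 2, and let G = (H^n) ⋊ S_n act on ℝ^{n×d} as the wreath product action. Then the dimension of the space of linear G-equivariant endomorphisms of ℝ^{n×d} equals E(H) + 1, which is strictly less than 2·E(H) (the corresponding dimension for the direct product S_n × H) whenever E(H) ≥ 2. -/

import Mathlib

/-!
Write an endomorphism `L` of `ℝ^{n×d}` as a block matrix with blocks `L_{ik} : ℝ^d → ℝ^d`.
Row permutations make all diagonal blocks equal to a single block `A`, which the diagonal copy of
`H` makes `H`-equivariant, and all off-diagonal blocks equal to each other. An off-diagonal block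
can moreover be twisted by independent elements `h_i, h_k ∈ H` on its two sides, so by
transitivity all of its entries equal one scalar `c`. Conversely
`X ↦ (A X_i + c · ∑_{k ≠ i} ∑_j X_{kj})_i` is equivariant for every `H`-equivariant `A`, and
`(A, c)` can be read off from this map, so the equivariant maps form a space isomorphic to
`E(H) × ℝ`.
-/

/-- The submodule of linear endomorphisms of `α → ℝ` that are equivariant with respect to the
permutation action of a subgroup `G` of the symmetric group. -/
noncomputable def equivSubmodule {α : Type*} [Fintype α] [DecidableEq α]
    (G : Subgroup (Equiv.Perm α)) :
    Submodule ℝ ((α → ℝ) →ₗ[ℝ] (α → ℝ)) where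
  carrier := {L | ∀ g ∈ G, ∀ x : α → ℝ, (L fun i => x (g⁻¹ i)) = fun i => L x (g⁻¹ i)}
  add_mem' := by
    intro L M hL hM g hg x
    simp only [LinearMap.add_apply, hL g hg x, hM g hg x]
    rfl
  zero_mem' := by intro g hg x; simp; rfl
  smul_mem' := by
    intro c L hL g hg x
    simp only [LinearMap.smul_apply, hL g hg x]
    rfl

/-- The submodule of linear endomorphisms of `ℝ^{n×d}` equivariant to the wreath product
`G = Hⁿ ⋊ S_n` acting by `((h₁,…,h_n,σ)·X)_{ij} = X_{σ⁻¹(i), h_i⁻¹(j)}`. -/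
noncomputable def wreathSubmodule {n d : ℕ} (H : Subgroup (Equiv.Perm (Fin d))) :
    Submodule ℝ ((Fin n → Fin d → ℝ) →ₗ[ℝ] (Fin n → Fin d → ℝ)) where
  carrier := {L | ∀ (σ : Equiv.Perm (Fin n)) (h : Fin n → Equiv.Perm (Fin d)),
    (∀ i, h i ∈ H) → ∀ X : Fin n → Fin d → ℝ,
    (L fun i => fun j => X (σ⁻¹ i) ((h i)⁻¹ j)) = fun i => fun j => L X (σ⁻¹ i) ((h i)⁻¹ j)}
  add_mem' := by
    intro L M hL hM σ h hh X
    simp only [LinearMap.add_apply, hL σ h hh X, hM σ h hh X]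
    rfl
  zero_mem' := by intro σ h hh X; simp; rfl
  smul_mem' := by
    intro c L hL σ h hh X
    simp only [LinearMap.smul_apply, hL σ h hh X]
    rfl

open Finset

theorem Equiv.Perm.exists_apply_eq_and_apply_eq {α : Type*} [DecidableEq α] {a b c e : α}
    (hab : a ≠ b) (hce : c ≠ e) :
    ∃ σ : Equiv.Perm α, σ a = c ∧ σ b = e := by
  refine ⟨Equiv.swap a c * Equiv.swap b (Equiv.swap a c e), ?_, ?_⟩
  · have hc : a ≠ Equiv.swap a c e := fun h => hce (by simpa using congrArg (Equiv.swap a c) h)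
    simp [Equiv.swap_apply_of_ne_of_ne hab hc]
  · simp

section Wreath

variable {n d : ℕ}

noncomputable def wreathMap :
    (Module.End ℝ (Fin d → ℝ) × ℝ) →ₗ[ℝ] Module.End ℝ (Fin n → Fin d → ℝ) where
  toFun p :=
    { toFun X i j := p.1 (X i) j + p.2 * ∑ k ∈ univ.erase i, ∑ j', X k j'
      map_add' X Y := by
        funext i j
        simp only [Pi.add_apply, map_add, sum_add_distrib]
        ring
      map_smul' r X := by
        funext i j
        simp only [Pi.smul_apply, map_smul, smul_eq_mul, ← mul_sum, RingHom.id_apply]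
        ring }
  map_add' p q := LinearMap.ext fun X => funext₂ fun i j => by
    simp only [LinearMap.coe_mk, AddHom.coe_mk, Prod.fst_add, Prod.snd_add, LinearMap.add_apply,
      Pi.add_apply]
    ring
  map_smul' r p := LinearMap.ext fun X => funext₂ fun i j => by
    simp only [LinearMap.coe_mk, AddHom.coe_mk, Prod.smul_fst, Prod.smul_snd,
      LinearMap.smul_apply, Pi.smul_apply, smul_eq_mul, RingHom.id_apply]
    ring

theorem wreathMap_apply (A : Module.End ℝ (Fin d → ℝ)) (c : ℝ) (X : Fin n → Fin d → ℝ)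
    (i : Fin n) (j : Fin d) :
    wreathMap (A, c) X i j = A (X i) j + c * ∑ k ∈ univ.erase i, ∑ j', X k j' :=
  rfl

theorem wreathMap_single_self (A : Module.End ℝ (Fin d → ℝ)) (c : ℝ) (i : Fin n)
    (x : Fin d → ℝ) : wreathMap (A, c) (Pi.single i x) i = A x := by
  funext j
  rw [wreathMap_apply, Pi.single_eq_same, sum_eq_zero, mul_zero, add_zero]
  intro k hk
  simp [Pi.single_eq_of_ne (ne_of_mem_erase hk)]

theorem wreathMap_single_single (A : Module.End ℝ (Fin d → ℝ)) (c : ℝ) (k : Fin n) (j : Fin d)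
    (i : Fin n) (j' : Fin d) :
    wreathMap (A, c) (Pi.single k (Pi.single j 1)) i j' =
      if i = k then A (Pi.single j 1) j' else c := by
  split_ifs with hik
  · rw [hik, wreathMap_single_self]
  · rw [wreathMap_apply, Pi.single_eq_of_ne hik, LinearMap.map_zero, Pi.zero_apply, zero_add,
      sum_eq_single_of_mem k (mem_erase.2 ⟨Ne.symm hik, mem_univ k⟩)]
    · simp
    · intro m _ hm
      simp [Pi.single_eq_of_ne hm]

variable {H : Subgroup (Equiv.Perm (Fin d))}

theorem wreathMap_mem_wreathSubmodule {A : Module.End ℝ (Fin d → ℝ)} (hA : A ∈ equivSubmodule H)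
    (c : ℝ) : wreathMap (n := n) (A, c) ∈ wreathSubmodule H := by
  intro σ h hh X
  funext i j
  have hrow : ∀ k, ∑ j', X (σ⁻¹ k) ((h k)⁻¹ j') = ∑ j', X (σ⁻¹ k) j' := fun k =>
    Equiv.sum_comp (h k)⁻¹ (X (σ⁻¹ k))
  have hrows : ∑ k ∈ univ.erase i, ∑ j', X (σ⁻¹ k) j' = ∑ k ∈ univ.erase (σ⁻¹ i), ∑ j', X k j' :=
    sum_equiv σ⁻¹ (by simp) (fun _ _ => rfl)
  simp only [wreathMap_apply, hA (h i) (hh i), hrow, hrows]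

variable {L : Module.End ℝ (Fin n → Fin d → ℝ)}

theorem apply_single_single_of_mem_wreathSubmodule (hL : L ∈ wreathSubmodule H)
    (σ : Equiv.Perm (Fin n)) (h : Fin n → Equiv.Perm (Fin d)) (hh : ∀ i, h i ∈ H)
    (k : Fin n) (j : Fin d) (i : Fin n) (j' : Fin d) :
    L (Pi.single (σ k) (Pi.single (h (σ k) j) 1)) (σ i) (h (σ i) j') =
      L (Pi.single k (Pi.single j 1)) i j' := by
  have hX : (fun i j' => (Pi.single k (Pi.single j 1) : Fin n → Fin d → ℝ) (σ⁻¹ i) ((h i)⁻¹ j'))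
      = Pi.single (σ k) (Pi.single (h (σ k) j) 1) := by
    funext i j'
    by_cases hik : i = σ k
    · subst hik
      simp [Pi.single_apply, Equiv.symm_apply_eq]
    · have : σ⁻¹ i ≠ k := fun h => hik (by simp [← h])
      rw [Pi.single_eq_of_ne this, Pi.single_eq_of_ne hik]
      rfl
  have := congrFun₂ (hL σ h hh (Pi.single k (Pi.single j 1))) (σ i) (h (σ i) j')
  rw [hX] at this
  simpa using this

noncomputable def diagBlock (L : Module.End ℝ (Fin n → Fin d → ℝ)) (i : Fin n) :
    Module.End ℝ (Fin d → ℝ) :=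
  LinearMap.proj i ∘ₗ L ∘ₗ LinearMap.single ℝ (fun _ : Fin n => Fin d → ℝ) i

theorem diagBlock_apply (i : Fin n) (x : Fin d → ℝ) : diagBlock L i x = L (Pi.single i x) i :=
  rfl

theorem diagBlock_mem_equivSubmodule (hL : L ∈ wreathSubmodule H) (i : Fin n) :
    diagBlock L i ∈ equivSubmodule H := by
  intro g hg x
  have hX : (fun k j => (Pi.single i x : Fin n → Fin d → ℝ) ((1 : Equiv.Perm (Fin n))⁻¹ k) (g⁻¹ j))
      = Pi.single i fun j => x (g⁻¹ j) := by
    funext k j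
    by_cases hk : k = i
    · subst hk; simp
    · simp [Pi.single_eq_of_ne hk]
  have := congrFun (hL 1 (fun _ => g) (fun _ => hg) (Pi.single i x)) i
  rwa [hX] at this

theorem apply_single_single_self_of_mem_wreathSubmodule (hL : L ∈ wreathSubmodule H)
    (i i' : Fin n) (j j' : Fin d) :
    L (Pi.single i (Pi.single j 1)) i j' = L (Pi.single i' (Pi.single j 1)) i' j' := by
  simpa using apply_single_single_of_mem_wreathSubmodule hL (Equiv.swap i' i) 1
    (fun _ => one_mem H) i' j i' j'

theorem apply_single_single_of_ne_of_mem_wreathSubmodule (hL : L ∈ wreathSubmodule H)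
    (htrans : ∀ j k : Fin d, ∃ h ∈ H, h j = k) {i k i' k' : Fin n} (hik : i ≠ k)
    (hik' : i' ≠ k') (j j' l l' : Fin d) :
    L (Pi.single k (Pi.single j 1)) i j' = L (Pi.single k' (Pi.single l 1)) i' l' := by
  obtain ⟨σ, hσk, hσi⟩ := Equiv.Perm.exists_apply_eq_and_apply_eq hik'.symm hik.symm
  obtain ⟨g, hg, hgl⟩ := htrans l j
  obtain ⟨g', hg', hgl'⟩ := htrans l' j'
  have key := apply_single_single_of_mem_wreathSubmodule hL σ (fun m => if m = k then g else g')
    (fun m => by split_ifs <;> assumption) k' l i' l'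
  simpa [hσk, hσi, hik, hgl, hgl'] using key

theorem eq_wreathMap_of_mem_wreathSubmodule (hL : L ∈ wreathSubmodule H)
    (htrans : ∀ j k : Fin d, ∃ h ∈ H, h j = k) {z o : Fin n} (hoz : o ≠ z) (j₀ : Fin d) :
    L = wreathMap (diagBlock L z, L (Pi.single z (Pi.single j₀ 1)) o j₀) := by
  ext k j i j'
  simp only [LinearMap.comp_apply, LinearMap.single_apply]
  rw [wreathMap_single_single]
  split_ifs with hik
  · rw [hik, diagBlock_apply, apply_single_single_self_of_mem_wreathSubmodule hL k z]
  · exact apply_single_single_of_ne_of_mem_wreathSubmodule hL htrans hik hoz j j' j₀ j₀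

theorem wreathMap_injective (hn : 2 ≤ n) (hd : 0 < d) :
    Function.Injective (wreathMap (n := n) (d := d)) := by
  rintro ⟨A, c⟩ ⟨A', c'⟩ h
  have := Fin.nontrivial_iff_two_le.2 hn
  obtain ⟨o, z, hoz⟩ := exists_pair_ne (Fin n)
  have hA : A = A' := LinearMap.ext fun x => by
    rw [← wreathMap_single_self A c z x, h, wreathMap_single_self]
  have hc : c = c' := by
    simpa [wreathMap_single_single, hoz] using
      congrFun₂ (LinearMap.congr_fun h (Pi.single z (Pi.single ⟨0, hd⟩ 1))) o ⟨0, hd⟩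
  rw [hA, hc]

theorem range_wreathMap_comp_prodMap (hn : 2 ≤ n) (hd : 0 < d)
    (htrans : ∀ j k : Fin d, ∃ h ∈ H, h j = k) :
    LinearMap.range (wreathMap ∘ₗ (equivSubmodule H).subtype.prodMap LinearMap.id) =
      wreathSubmodule (n := n) H := by
  apply le_antisymm
  · rintro _ ⟨⟨A, c⟩, rfl⟩
    exact wreathMap_mem_wreathSubmodule A.2 c
  · intro L hL
    have := Fin.nontrivial_iff_two_le.2 hn
    obtain ⟨o, z, hoz⟩ := exists_pair_ne (Fin n)
    exact ⟨(⟨diagBlock L z, diagBlock_mem_equivSubmodule hL z⟩, _),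
      (eq_wreathMap_of_mem_wreathSubmodule hL htrans hoz ⟨0, hd⟩).symm⟩

theorem finrank_wreathSubmodule (hn : 2 ≤ n) (hd : 0 < d)
    (htrans : ∀ j k : Fin d, ∃ h ∈ H, h j = k) :
    Module.finrank ℝ (wreathSubmodule (n := n) H) = Module.finrank ℝ (equivSubmodule H) + 1 := by
  have hinj : Function.Injective (wreathMap (n := n) ∘ₗ (equivSubmodule H).subtype.prodMap
      LinearMap.id) :=
    (wreathMap_injective hn hd).comp (Subtype.val_injective.prodMap Function.injective_id)
  have := Module.Free.of_divisionRing ℝ (equivSubmodule H)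
  rw [← range_wreathMap_comp_prodMap hn hd htrans, LinearMap.finrank_range_of_inj hinj,
    Module.finrank_prod, Module.finrank_self]

end Wreath

/-- **Wreath-product equivariant maps are fewer than direct-product ones.** For transitive
`H ≤ S_d`, `n ≥ 2`, the space of linear endomorphisms of `ℝ^{n×d}` equivariant to the wreath
product `Hⁿ ⋊ S_n` has dimension `E(H) + 1`; and whenever `E(H) ≥ 2` this is strictly smaller
than `2·E(H)`, the dimension for the direct product `S_n × H`. -/
theorem wreath_dim_lt_product_dim {n d : ℕ} (hn : 2 ≤ n) (hd : 0 < d)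
    (H : Subgroup (Equiv.Perm (Fin d)))
    (htrans : ∀ j k : Fin d, ∃ h ∈ H, h j = k) :
    Module.finrank ℝ (wreathSubmodule (n := n) H) =
        Module.finrank ℝ (equivSubmodule H) + 1 ∧
      (2 ≤ Module.finrank ℝ (equivSubmodule H) →
        Module.finrank ℝ (wreathSubmodule (n := n) H) <
          2 * Module.finrank ℝ (equivSubmodule H)) := by
  have h := finrank_wreathSubmodule hn hd htrans
  exact ⟨h, fun _ => by omega⟩
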